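/- Let R be a commutative Noetherian ring and N a finitely generated R-module. Then the map Hom_R(R, N) → lim_{p ∈ Spec R} Hom_{R_p}(R_p, N_p) (where the limit is over the poset of primes with localization transition maps) is a bijection; equivalently, every family (s_p)_{p} with s_p ∈ N_p compatible with localization arises from a unique global element s ∈ N. -/

import Mathlib

open LocalizedModule

variable {R : Type*} [CommRing R]

/-- The canonical localization map `M_p → M_q` for primes `q ⊆ p`. -/
noncomputable def specMap (M : Type*) [AddCommGroup M] [Module R M]
    (p q : PrimeSpectrum R) (h : q.asIdeal ≤ p.asIdeal) :
    LocalizedModule p.asIdeal.primeCompl M →ₗ[R] LocalizedModule q.asIdeal.primeCompl M :=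
  LocalizedModule.lift _ (mkLinearMap q.asIdeal.primeCompl M)
    (fun x => IsLocalizedModule.map_units (mkLinearMap q.asIdeal.primeCompl M)
      (⟨x.1, fun hx => x.2 (h hx)⟩ : q.asIdeal.primeCompl))

/-- A family of germs `(σ_p ∈ M_p)_p` is compatible with localization if the
localization maps `M_p → M_q` (for `q ⊆ p`) carry `σ_p` to `σ_q`. -/
def IsCompatible (M : Type*) [AddCommGroup M] [Module R M]
    (σ : ∀ p : PrimeSpectrum R, LocalizedModule p.asIdeal.primeCompl M) : Prop :=
  ∀ (p q : PrimeSpectrum R) (h : q.asIdeal ≤ p.asIdeal), specMap M p q h (σ p) = σ q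

lemma specMap_mk (M : Type*) [AddCommGroup M] [Module R M]
    (p q : PrimeSpectrum R) (h : q.asIdeal ≤ p.asIdeal) (m : M) :
    specMap M p q h (mkLinearMap p.asIdeal.primeCompl M m)
      = mkLinearMap q.asIdeal.primeCompl M m := by
  exact LinearMap.congr_fun (LocalizedModule.lift_comp p.asIdeal.primeCompl
    (mkLinearMap q.asIdeal.primeCompl M)
    (fun x => IsLocalizedModule.map_units (mkLinearMap q.asIdeal.primeCompl M)
      (⟨x.1, fun hx => x.2 (h hx)⟩ : q.asIdeal.primeCompl))) m

/-- The submodule of `∏_p M_p` consisting of families compatible with localization,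
i.e. the inverse limit `lim_{p ∈ Spec R} M_p` over the specialization order. -/
noncomputable def compatibleFamilies (M : Type*) [AddCommGroup M] [Module R M] :
    Submodule R (∀ p : PrimeSpectrum R, LocalizedModule p.asIdeal.primeCompl M) where
  carrier := {σ | IsCompatible M σ}
  add_mem' {a b} ha hb p q h := by simp [map_add, ha p q h, hb p q h]
  zero_mem' p q h := by simp
  smul_mem' r a ha p q h := by simp [map_smul, ha p q h]

/-- The natural `R`-linear map `M → lim_{p ∈ Spec R} M_p` sending `m` to the
compatible family of its germs `m/1`. -/
noncomputable def toCompatibleFamilies (M : Type*) [AddCommGroup M] [Module R M] :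
    M →ₗ[R] compatibleFamilies (R := R) M :=
  (LinearMap.pi (fun p : PrimeSpectrum R => mkLinearMap p.asIdeal.primeCompl M)).codRestrict
    (compatibleFamilies M) (fun m p q h => specMap_mk M p q h m)

lemma lm_mk_eq_zero {S : Submonoid R} {M : Type*} [AddCommGroup M] [Module R M]
    (m : M) (s : S) : LocalizedModule.mk m s = 0 ↔ ∃ u : S, u • m = 0 := by
  rw [show (0 : LocalizedModule S M) = LocalizedModule.mk 0 1 from (LocalizedModule.zero_mk 1).symm,
    LocalizedModule.mk_eq]
  constructor
  · rintro ⟨u, hu⟩; exact ⟨u, by simpa using hu⟩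
  · rintro ⟨u, hu⟩; exact ⟨u, by simpa using hu⟩

lemma specMap_mk' (M : Type*) [AddCommGroup M] [Module R M]
    (p q : PrimeSpectrum R) (h : q.asIdeal ≤ p.asIdeal) (m : M) (s : p.asIdeal.primeCompl) :
    specMap M p q h (LocalizedModule.mk m s)
      = LocalizedModule.mk m (⟨s.1, fun hs => s.2 (h hs)⟩ : q.asIdeal.primeCompl) := by
  set s' : q.asIdeal.primeCompl := ⟨s.1, fun hs => s.2 (h hs)⟩ with hs'
  apply IsLocalizedModule.smul_injective (mkLinearMap q.asIdeal.primeCompl M) s'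
  show s' • _ = s' • _
  have h1 : (s.1 : R) • LocalizedModule.mk m s = mkLinearMap p.asIdeal.primeCompl M m := by
    rw [LocalizedModule.smul'_mk, LocalizedModule.mkLinearMap_apply, ← Submonoid.smul_def,
      LocalizedModule.mk_cancel]
  have h2 : (s.1 : R) • LocalizedModule.mk m s' = mkLinearMap q.asIdeal.primeCompl M m := by
    rw [LocalizedModule.smul'_mk, LocalizedModule.mkLinearMap_apply,
      show (s.1 : R) • m = s' • m from rfl, LocalizedModule.mk_cancel]
  rw [Submonoid.smul_def, Submonoid.smul_def, ← map_smul, h1, h2, specMap_mk]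

lemma specMap_map {M N₂ : Type*} [AddCommGroup M] [Module R M] [AddCommGroup N₂] [Module R N₂]
    (f : M →ₗ[R] N₂) (p q : PrimeSpectrum R) (h : q.asIdeal ≤ p.asIdeal)
    (ξ : LocalizedModule p.asIdeal.primeCompl M) :
    specMap N₂ p q h (LocalizedModule.map p.asIdeal.primeCompl f ξ)
      = LocalizedModule.map q.asIdeal.primeCompl f (specMap M p q h ξ) := by
  refine LocalizedModule.induction_on (fun m s => ?_) ξ
  rw [LocalizedModule.map_mk, specMap_mk', specMap_mk', LocalizedModule.map_mk]

lemma map_rsmul {M N₂ : Type*} [AddCommGroup M] [Module R M] [AddCommGroup N₂] [Module R N₂]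
    (S : Submonoid R) (f : M →ₗ[R] N₂) (u : R) (ξ : LocalizedModule S M) :
    LocalizedModule.map S f (u • ξ) = u • LocalizedModule.map S f ξ := by
  refine LocalizedModule.induction_on (fun m s => ?_) ξ
  rw [LocalizedModule.smul'_mk, LocalizedModule.map_mk, LocalizedModule.map_mk,
    LocalizedModule.smul'_mk, map_smul]

lemma lemA_cyclic {M : Type*} [AddCommGroup M] [Module R M] (x : M)
    (hgen : ∀ m : M, ∃ r : R, r • x = m) (p' : Ideal R) (hp' : p'.IsPrime)
    (hann : ∀ r : R, r • x = 0 ↔ r ∈ p') (p : PrimeSpectrum R)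
    (τ : ∀ q : PrimeSpectrum R, LocalizedModule q.asIdeal.primeCompl M)
    (hτ : IsCompatible M τ) (h0 : ∀ q : PrimeSpectrum R, q.asIdeal ≤ p.asIdeal → τ q = 0) :
    ∃ u ∈ p.asIdeal.primeCompl, ∀ q, u • τ q = 0 := by
  by_cases hsub : p' ≤ p.asIdeal
  · refine ⟨1, p.asIdeal.primeCompl.one_mem, fun q => ?_⟩
    rw [one_smul]
    by_cases hq : p' ≤ q.asIdeal
    · set P' : PrimeSpectrum R := ⟨p', hp'⟩ with hP'
      have key : ∀ ξ : LocalizedModule q.asIdeal.primeCompl M,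
          specMap M q P' hq ξ = 0 → ξ = 0 := by
        intro ξ
        refine LocalizedModule.induction_on (fun m s => ?_) ξ
        intro hξ
        rw [specMap_mk'] at hξ
        obtain ⟨v, hv⟩ := (lm_mk_eq_zero _ _).mp hξ
        obtain ⟨r, hr⟩ := hgen m
        have hvr : v.1 * r ∈ p' := by
          refine (hann _).mp ?_
          rw [mul_smul, hr, ← Submonoid.smul_def]
          exact hv
        have hrp : r ∈ p' := (hp'.mem_or_mem hvr).resolve_left v.2
        have hm0 : m = 0 := by rw [← hr]; exact (hann r).mpr hrp
        rw [hm0, LocalizedModule.zero_mk]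
      have hc := hτ q P' hq
      rw [h0 P' hsub] at hc
      exact key _ hc
    · obtain ⟨u, hu1, hu2⟩ := SetLike.not_le_iff_exists.mp hq
      refine LocalizedModule.induction_on (fun m s => ?_) (τ q)
      obtain ⟨r, hr⟩ := hgen m
      have hm : u • m = 0 := by rw [← hr, smul_comm, (hann u).mpr hu1, smul_zero]
      exact (lm_mk_eq_zero m s).mpr ⟨⟨u, hu2⟩, by rw [Submonoid.smul_def]; exact hm⟩
  · obtain ⟨u, hu1, hu2⟩ := SetLike.not_le_iff_exists.mp hsub
    refine ⟨u, hu2, fun q => ?_⟩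
    refine LocalizedModule.induction_on (fun m s => ?_) (τ q)
    rw [LocalizedModule.smul'_mk]
    obtain ⟨r, hr⟩ := hgen m
    have hm : u • m = 0 := by rw [← hr, smul_comm, (hann u).mpr hu1, smul_zero]
    rw [hm, LocalizedModule.zero_mk]

lemma lemA [IsNoetherianRing R] (p : PrimeSpectrum R) (M : Type*) [AddCommGroup M]
    [Module R M] [Module.Finite R M]
    (τ : ∀ q : PrimeSpectrum R, LocalizedModule q.asIdeal.primeCompl M)
    (hτ : IsCompatible M τ) (h0 : ∀ q : PrimeSpectrum R, q.asIdeal ≤ p.asIdeal → τ q = 0) :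
    ∃ u ∈ p.asIdeal.primeCompl, ∀ q, u • τ q = 0 := by
  have main : ∀ W : Submodule R M,
      ∀ τ' : (∀ q : PrimeSpectrum R, LocalizedModule q.asIdeal.primeCompl (M ⧸ W)),
        IsCompatible (M ⧸ W) τ' → (∀ q, q.asIdeal ≤ p.asIdeal → τ' q = 0) →
        ∃ u ∈ p.asIdeal.primeCompl, ∀ q, u • τ' q = 0 := by
    intro W
    induction W using IsNoetherian.induction with
    | _ W IH =>
    intro τ' hτ' h0'
    by_cases hW : W = ⊤
    · refine ⟨1, p.asIdeal.primeCompl.one_mem, fun q => ?_⟩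
      subst hW
      have hz : ∀ ξ : LocalizedModule q.asIdeal.primeCompl (M ⧸ (⊤ : Submodule R M)), ξ = 0 := by
        intro ξ; refine LocalizedModule.induction_on (fun m s => ?_) ξ
        rw [Subsingleton.elim m 0, LocalizedModule.zero_mk]
      rw [one_smul, hz (τ' q)]
    · haveI : Nontrivial (M ⧸ W) := (Submodule.Quotient.nontrivial_iff (p := W)).mpr hW
      obtain ⟨p', hp'⟩ := associatedPrimes.nonempty R (M ⧸ W)
      obtain ⟨hp'p, x, hx⟩ := isAssociatedPrime_iff.mp hp'
      have hxann : ∀ r : R, r • x = 0 ↔ r ∈ p' := fun r => by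
        rw [hx, Submodule.mem_colon_singleton, Submodule.mem_bot]
      have hxne : x ≠ 0 := by
        intro h
        exact hp'p.ne_top (Ideal.eq_top_iff_one _ |>.mpr
          ((hxann 1).mp (by rw [h, smul_zero])))
      obtain ⟨y, hy⟩ := Submodule.Quotient.mk_surjective W x
      set W' : Submodule R M := Submodule.comap W.mkQ (Submodule.span R {x}) with hW'
      have hle : W ≤ W' := by
        intro z hz
        have : W.mkQ z = 0 := (Submodule.Quotient.mk_eq_zero W).mpr hz
        exact Submodule.mem_comap.mpr (by rw [this]; exact zero_mem _)
      have hlt : W < W' := by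
        refine lt_of_le_of_ne hle (fun he => ?_)
        have hyW' : y ∈ W' := Submodule.mem_comap.mpr
          (by rw [show W.mkQ y = x from hy]; exact Submodule.mem_span_singleton_self x)
        rw [← he] at hyW'
        exact hxne (by rw [← hy]; exact (Submodule.Quotient.mk_eq_zero W).mpr hyW')
      set g : (M ⧸ W) →ₗ[R] (M ⧸ W') := Submodule.mapQ W W' LinearMap.id hle with hg
      have hg_mk : ∀ z : M, g (W.mkQ z) = W'.mkQ z := fun z => by
        simp [hg, Submodule.mapQ_apply]
      have hg_ker : ∀ a : M ⧸ W, g a = 0 → a ∈ Submodule.span R {x} := by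
        intro a ha
        obtain ⟨z, rfl⟩ := Submodule.Quotient.mk_surjective W a
        rw [show (Submodule.Quotient.mk z : M ⧸ W) = W.mkQ z from rfl, hg_mk] at ha
        exact Submodule.mem_comap.mp ((Submodule.Quotient.mk_eq_zero W').mp ha)
      set τ'' := fun q : PrimeSpectrum R =>
        LocalizedModule.map q.asIdeal.primeCompl g (τ' q) with hτ''def
      have hτ''c : IsCompatible (M ⧸ W') τ'' := by
        intro a b h
        rw [hτ''def]
        simp only []
        rw [specMap_map, hτ' a b h]
      have hτ''0 : ∀ q, q.asIdeal ≤ p.asIdeal → τ'' q = 0 := fun q hq => by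
        rw [hτ''def]; simp only []; rw [h0' q hq, map_zero]
      obtain ⟨u₁, hu₁, hkill₁⟩ := IH W' hlt τ'' hτ''c hτ''0
      set ι : ↥(Submodule.span R {x}) →ₗ[R] (M ⧸ W) := (Submodule.span R {x}).subtype with hι
      have hinj : ∀ q : PrimeSpectrum R,
          Function.Injective (LocalizedModule.map q.asIdeal.primeCompl ι) :=
        fun q => LocalizedModule.map_injective _ ι (Submodule.injective_subtype _)
      have lift_ex : ∀ q : PrimeSpectrum R,
          ∃ η : LocalizedModule q.asIdeal.primeCompl ↥(Submodule.span R {x}),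
          LocalizedModule.map q.asIdeal.primeCompl ι η = u₁ • τ' q := by
        intro q
        have hker : LocalizedModule.map q.asIdeal.primeCompl g (u₁ • τ' q) = 0 := by
          rw [map_rsmul]
          have := hkill₁ q
          rw [hτ''def] at this
          exact this
        obtain ⟨m, s, hms⟩ : ∃ m s, u₁ • τ' q = LocalizedModule.mk m s :=
          LocalizedModule.induction_on
            (β := fun ξ => ∃ m s, ξ = LocalizedModule.mk m s)
            (fun m s => ⟨m, s, rfl⟩) (u₁ • τ' q)
        rw [hms] at hker ⊢
        rw [LocalizedModule.map_mk] at hker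
        obtain ⟨v, hv⟩ := (lm_mk_eq_zero _ _).mp hker
        have hva : g (v.1 • m) = 0 := by
          rw [map_smul, ← Submonoid.smul_def, hv]
        have hmem : v.1 • m ∈ Submodule.span R {x} := hg_ker _ hva
        refine ⟨LocalizedModule.mk ⟨v.1 • m, hmem⟩ (v * s), ?_⟩
        rw [LocalizedModule.map_mk]
        rw [LocalizedModule.mk_eq]
        refine ⟨1, ?_⟩
        show (1 : R) • s • (ι ⟨v.1 • m, hmem⟩) = (1 : R) • (v * s) • m
        simp only [one_smul, Submonoid.smul_def, Submonoid.coe_mul, hι,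
          Submodule.coe_subtype]
        rw [← mul_smul, mul_comm]
      choose τ''' hτ''' using lift_ex
      have hτ'''c : IsCompatible ↥(Submodule.span R {x}) τ''' := by
        intro a b h
        apply hinj b
        rw [← specMap_map, hτ''' a, hτ''' b, map_smul, hτ' a b h]
      have hτ'''0 : ∀ q, q.asIdeal ≤ p.asIdeal → τ''' q = 0 := by
        intro q hq
        apply hinj q
        rw [hτ''' q, h0' q hq, smul_zero, map_zero]
      have hgen : ∀ m : ↥(Submodule.span R {x}),
          ∃ r : R, r • (⟨x, Submodule.mem_span_singleton_self x⟩ : ↥(Submodule.span R {x})) = m := by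
        intro m
        obtain ⟨r, hr⟩ := Submodule.mem_span_singleton.mp m.2
        exact ⟨r, Subtype.ext hr⟩
      have hann : ∀ r : R,
          r • (⟨x, Submodule.mem_span_singleton_self x⟩ : ↥(Submodule.span R {x})) = 0 ↔ r ∈ p' := by
        intro r
        rw [← hxann r]
        constructor
        · intro h; exact congrArg Subtype.val h
        · intro h; exact Subtype.ext h
      obtain ⟨u₂, hu₂, hkill₂⟩ := lemA_cyclic _ hgen p' hp'p hann p τ''' hτ'''c hτ'''0
      refine ⟨u₂ * u₁, Submonoid.mul_mem _ hu₂ hu₁, fun q => ?_⟩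
      calc (u₂ * u₁) • τ' q = u₂ • (u₁ • τ' q) := mul_smul u₂ u₁ (τ' q)
        _ = u₂ • LocalizedModule.map q.asIdeal.primeCompl ι (τ''' q) := by rw [hτ''' q]
        _ = LocalizedModule.map q.asIdeal.primeCompl ι (u₂ • τ''' q) := (map_rsmul _ _ _ _).symm
        _ = 0 := by rw [hkill₂ q, map_zero]
  have hinj0 : Function.Injective
      (fun z : M => z) := fun a b h => h
  obtain ⟨u, hu, hk⟩ := main ⊥
    (fun q => LocalizedModule.map q.asIdeal.primeCompl (⊥ : Submodule R M).mkQ (τ q))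
    (fun a b h => by rw [specMap_map, hτ a b h])
    (fun q hq => by show LocalizedModule.map _ _ (τ q) = 0; rw [h0 q hq, map_zero])
  refine ⟨u, hu, fun q => ?_⟩
  have hmkinj : Function.Injective (⊥ : Submodule R M).mkQ := by
    rw [← LinearMap.ker_eq_bot, Submodule.ker_mkQ]
  apply LocalizedModule.map_injective q.asIdeal.primeCompl (⊥ : Submodule R M).mkQ hmkinj
  rw [map_rsmul, hk q, map_zero]

/-- For a Noetherian ring `R` and a finitely generated `R`-module `N`, every family
`(s_p ∈ N_p)_p` compatible with localization arises from a unique global element `s ∈ N`;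
equivalently `Hom_R(R,N) → lim_p Hom_{R_p}(R_p, N_p)` is a bijection. -/
theorem exists_unique_global_section [IsNoetherianRing R]
    (N : Type*) [AddCommGroup N] [Module R N] [Module.Finite R N]
    (σ : ∀ p : PrimeSpectrum R, LocalizedModule p.asIdeal.primeCompl N)
    (hσ : IsCompatible N σ) :
    ∃! s : N, ∀ p : PrimeSpectrum R, mkLinearMap p.asIdeal.primeCompl N s = σ p := by
  classical
  let J : Ideal R :=
    { carrier := {r | ∃ n : N, ∀ q : PrimeSpectrum R,
        r • σ q = mkLinearMap q.asIdeal.primeCompl N n}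
      add_mem' := by
        rintro a b ⟨n₁, h₁⟩ ⟨n₂, h₂⟩
        exact ⟨n₁ + n₂, fun q => by rw [add_smul, h₁ q, h₂ q, map_add]⟩
      zero_mem' := ⟨0, fun q => by rw [zero_smul, map_zero]⟩
      smul_mem' := by
        rintro c r ⟨n, h⟩
        exact ⟨c • n, fun q => by rw [smul_eq_mul, mul_smul, h q, map_smul]⟩ }
  have hJ : ∀ (m : Ideal R), m.IsMaximal → ¬ J ≤ m := by
    intro m hm hle
    set P : PrimeSpectrum R := ⟨m, hm.isPrime⟩ with hP
    obtain ⟨n, t, hnt⟩ : ∃ n t, σ P = LocalizedModule.mk n t :=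
      LocalizedModule.induction_on
        (β := fun ξ => ∃ n t, ξ = LocalizedModule.mk n t)
        (fun n t => ⟨n, t, rfl⟩) (σ P)
    set τ : ∀ q : PrimeSpectrum R, LocalizedModule q.asIdeal.primeCompl N :=
      fun q => t.1 • σ q - mkLinearMap q.asIdeal.primeCompl N n with hτdef
    have hτc : IsCompatible N τ := by
      intro a b h
      show specMap N a b h (t.1 • σ a - mkLinearMap a.asIdeal.primeCompl N n) = _
      rw [map_sub, map_smul, hσ a b h, specMap_mk]
    have hτP : τ P = 0 := by
      show t.1 • σ P - mkLinearMap P.asIdeal.primeCompl N n = 0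
      rw [hnt, LocalizedModule.smul'_mk, ← Submonoid.smul_def, LocalizedModule.mk_cancel,
        LocalizedModule.mkLinearMap_apply, sub_self]
    have hτ0 : ∀ q : PrimeSpectrum R, q.asIdeal ≤ P.asIdeal → τ q = 0 := by
      intro q hq
      rw [← hτc P q hq, hτP, map_zero]
    obtain ⟨u, hu, hkill⟩ := lemA P N τ hτc hτ0
    have hmem : u * t.1 ∈ J := by
      refine ⟨u • n, fun q => ?_⟩
      have hk := hkill q
      have h2 : u • (t.1 • σ q) = u • (mkLinearMap q.asIdeal.primeCompl N n) := by
        have : u • (t.1 • σ q - mkLinearMap q.asIdeal.primeCompl N n) = 0 := hk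
        rw [smul_sub] at this
        exact sub_eq_zero.mp this
      rw [mul_smul, h2, map_smul]
    have hmm : u * t.1 ∈ m := hle hmem
    exact (m.primeCompl.mul_mem hu t.2) hmm
  have hJtop : J = ⊤ := by
    by_contra h
    obtain ⟨m, hm, hle⟩ := Ideal.exists_le_maximal J h
    exact hJ m hm hle
  have h1J : (1 : R) ∈ J := by rw [hJtop]; exact Submodule.mem_top
  obtain ⟨n, hn⟩ := h1J
  have hglob : ∀ q : PrimeSpectrum R, mkLinearMap q.asIdeal.primeCompl N n = σ q := by
    intro q
    have := hn q
    rw [one_smul] at this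
    exact this.symm
  refine ⟨n, hglob, ?_⟩
  intro y hy
  have hyq : ∀ q : PrimeSpectrum R,
      LocalizedModule.mk (y - n) (1 : q.asIdeal.primeCompl) = 0 := by
    intro q
    rw [← LocalizedModule.mkLinearMap_apply, map_sub, hy q, hglob q, sub_self]
  let A : Ideal R :=
    { carrier := {r | r • (y - n) = 0}
      add_mem' := by
        intro a b ha hb
        show (a + b) • (y - n) = 0
        rw [add_smul, ha, hb, add_zero]
      zero_mem' := zero_smul R (y - n)
      smul_mem' := by
        intro c r h
        show (c * r) • (y - n) = 0
        rw [mul_smul, h, smul_zero] }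
  have hA : A = ⊤ := by
    by_contra h
    obtain ⟨m, hm, hle⟩ := Ideal.exists_le_maximal A h
    set P : PrimeSpectrum R := ⟨m, hm.isPrime⟩ with hP
    obtain ⟨v, hv⟩ := (lm_mk_eq_zero _ _).mp (hyq P)
    have hvA : v.1 ∈ A := by
      show v.1 • (y - n) = 0
      rw [← Submonoid.smul_def]
      exact hv
    exact v.2 (hle hvA)
  have h1A : (1 : R) ∈ A := by rw [hA]; exact Submodule.mem_top
  have : y - n = 0 := by
    have := h1A
    rwa [show ((1 : R) ∈ A) = ((1 : R) • (y - n) = 0) from rfl, one_smul] at this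
  exact sub_eq_zero.mp this
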